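/- arXiv:2002.08907 — 3 statements merged into one kernel-verified Lean document; each statement's English description precedes it below -/
import Mathlib

section
/- Let X ⊆ ℝⁿ be a nonempty compact convex set, f : ℝⁿ → ℝ differentiable, x_k ∈ X, and H_k ∈ ℝ^{n×n} symmetric positive definite. Then for all constants α > 0 and ν > 0 with αν ≥ 1: min_{x∈X} ( ⟨∇f(x_k), x − x_k⟩ + (α/2)‖x − x_k‖²_{H_k} ) ≤ (1/(αν)) · min_{x∈X} ( ⟨∇f(x_k), x − x_k⟩ + (1/(2ν))‖x − x_k‖²_{H_k} ). -/
open Matrix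
open scoped RealInnerProductSpace

/-- The largest (real) eigenvalue of a matrix, as the supremum of its real spectrum. -/
noncomputable def lamMax {n : ℕ} (M : Matrix (Fin n) (Fin n) ℝ) : ℝ :=
  sSup (spectrum ℝ M)

/-- The smallest (real) eigenvalue of a matrix, as the infimum of its real spectrum. -/
noncomputable def lamMin {n : ℕ} (M : Matrix (Fin n) (Fin n) ℝ) : ℝ :=
  sInf (spectrum ℝ M)

/-- Action of a matrix on a vector of Euclidean space. -/
noncomputable def mApply {n : ℕ} (H : Matrix (Fin n) (Fin n) ℝ)
    (v : EuclideanSpace ℝ (Fin n)) : EuclideanSpace ℝ (Fin n) :=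
  Matrix.toEuclideanCLM (𝕜 := ℝ) H v

/-- The squared matrix "norm" ‖v‖²_H := vᵀ H v. -/
noncomputable def qForm {n : ℕ} (H : Matrix (Fin n) (Fin n) ℝ)
    (v : EuclideanSpace ℝ (Fin n)) : ℝ :=
  ⟪v, mApply H v⟫

/-- Spectral (ℓ² operator) norm of a matrix. -/
noncomputable def mNorm {n : ℕ} (H : Matrix (Fin n) (Fin n) ℝ) : ℝ :=
  ‖Matrix.toEuclideanCLM (𝕜 := ℝ) H‖

/-!
Shrinking a point `x ∈ X` towards `x_k` by the factor `c = 1/(αν) ∈ (0, 1]` stays in `X` by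
convexity, and since the model is linear plus quadratic in `x - x_k`, the model with weight `α/2`
at the shrunk point equals `c` times the model with weight `cα/2 = 1/(2ν)` at `x`.
-/

theorem sInf_image_le_mul_sInf_image {α β : Type*} {f : α → ℝ} {g : β → ℝ} {s : Set α}
    {t : Set β} {c : ℝ} (hc : 0 < c) (hf : BddBelow (f '' s)) (ht : t.Nonempty)
    (h : ∀ y ∈ t, ∃ x ∈ s, f x ≤ c * g y) :
    sInf (f '' s) ≤ c * sInf (g '' t) := by
  rw [← div_le_iff₀' hc]
  refine le_csInf (ht.image g) ?_
  rintro _ ⟨y, hy, rfl⟩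
  obtain ⟨x, hx, hxy⟩ := h y hy
  rw [div_le_iff₀' hc]
  exact (csInf_le hf (Set.mem_image_of_mem f hx)).trans hxy

section QuadraticModel

variable {n : ℕ}

theorem qForm_smul (H : Matrix (Fin n) (Fin n) ℝ) (c : ℝ) (v : EuclideanSpace ℝ (Fin n)) :
    qForm H (c • v) = c ^ 2 * qForm H v := by
  simp only [qForm, mApply, map_smul, real_inner_smul_left, real_inner_smul_right]
  ring

theorem continuous_qForm (H : Matrix (Fin n) (Fin n) ℝ) : Continuous (qForm H) :=
  continuous_id.inner (Matrix.toEuclideanCLM (𝕜 := ℝ) H).continuous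

noncomputable def quadModel (H : Matrix (Fin n) (Fin n) ℝ) (g x₀ : EuclideanSpace ℝ (Fin n))
    (β : ℝ) (x : EuclideanSpace ℝ (Fin n)) : ℝ :=
  ⟪g, x - x₀⟫ + β * qForm H (x - x₀)

theorem continuous_quadModel (H : Matrix (Fin n) (Fin n) ℝ) (g x₀ : EuclideanSpace ℝ (Fin n))
    (β : ℝ) : Continuous (quadModel H g x₀ β) :=
  (continuous_const.inner (continuous_sub_right x₀)).add
    (continuous_const.mul ((continuous_qForm H).comp (continuous_sub_right x₀)))

theorem quadModel_add_smul_sub (H : Matrix (Fin n) (Fin n) ℝ)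
    (g x₀ x : EuclideanSpace ℝ (Fin n)) (β c : ℝ) :
    quadModel H g x₀ β (x₀ + c • (x - x₀)) = c * quadModel H g x₀ (c * β) x := by
  simp only [quadModel, add_sub_cancel_left, qForm_smul, real_inner_smul_right]
  ring

end QuadraticModel

theorem socgs_quadratic_subproblem_scaling_general {n : ℕ}
    (X : Set (EuclideanSpace ℝ (Fin n)))
    (hne : X.Nonempty) (hcomp : IsCompact X) (hconv : Convex ℝ X)
    (f : EuclideanSpace ℝ (Fin n) → ℝ)
    (xk : EuclideanSpace ℝ (Fin n)) (hxk : xk ∈ X)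
    (Hk : Matrix (Fin n) (Fin n) ℝ)
    (α ν : ℝ) (hα : 0 < α) (hν : 0 < ν) (hαν : 1 ≤ α * ν) :
    sInf ((fun x => ⟪gradient f xk, x - xk⟫ + α / 2 * qForm Hk (x - xk)) '' X) ≤
      (1 / (α * ν)) *
        sInf ((fun x => ⟪gradient f xk, x - xk⟫ + 1 / (2 * ν) * qForm Hk (x - xk)) '' X) := by
  set c := 1 / (α * ν) with hc
  have hc_pos : 0 < c := by positivity
  have hc_le_one : c ≤ 1 := div_le_one_of_le₀ hαν (by positivity)
  have hweight : c * (α / 2) = 1 / (2 * ν) := by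
    rw [hc]
    field_simp
  change sInf (quadModel Hk (gradient f xk) xk (α / 2) '' X) ≤
    c * sInf (quadModel Hk (gradient f xk) xk (1 / (2 * ν)) '' X)
  refine sInf_image_le_mul_sInf_image hc_pos
    (hcomp.image (continuous_quadModel _ _ _ _)).bddBelow hne fun x hx => ?_
  refine ⟨xk + c • (x - xk), hconv.add_smul_sub_mem hxk hx ⟨hc_pos.le, hc_le_one⟩, ?_⟩
  rw [quadModel_add_smul_sub, hweight]

/-- for `α, ν > 0` with `αν ≥ 1`,
`min_{x∈X} (⟨∇f(x_k), x − x_k⟩ + (α/2)‖x − x_k‖²_{H_k})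
  ≤ (1/(αν)) min_{x∈X} (⟨∇f(x_k), x − x_k⟩ + (1/(2ν))‖x − x_k‖²_{H_k})`. -/
theorem socgs_quadratic_subproblem_scaling {n : ℕ}
    (X : Set (EuclideanSpace ℝ (Fin n)))
    (hne : X.Nonempty) (hcomp : IsCompact X) (hconv : Convex ℝ X)
    (f : EuclideanSpace ℝ (Fin n) → ℝ) (hf : Differentiable ℝ f)
    (xk : EuclideanSpace ℝ (Fin n)) (hxk : xk ∈ X)
    (Hk : Matrix (Fin n) (Fin n) ℝ) (hHk : Hk.PosDef)
    (α ν : ℝ) (hα : 0 < α) (hν : 0 < ν) (hαν : 1 ≤ α * ν) :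
    sInf ((fun x => ⟪gradient f xk, x - xk⟫ + α / 2 * qForm Hk (x - xk)) '' X) ≤
      (1 / (α * ν)) *
        sInf ((fun x => ⟪gradient f xk, x - xk⟫ + 1 / (2 * ν) * qForm Hk (x - xk)) '' X) :=
  socgs_quadratic_subproblem_scaling_general X hne hcomp hconv f xk hxk Hk α ν hα hν hαν
end

section
/- Let X ⊆ ℝⁿ be a nonempty compact convex set and f : ℝⁿ → ℝ twice continuously differentiable with μ·I ⪯ ∇²f(x) ⪯ L·I for all x ∈ X (0 < μ ≤ L), with unique minimizer x* over X. Let x ∈ X and let H ∈ ℝ^{n×n} be symmetric positive definite with η := max{λ_max(H⁻¹∇²f(x)), λ_max((∇²f(x))⁻¹H)} satisfying η − 1 ≤ ω·‖x − x*‖² for a constant ω ≥ 0. Then, in the spectral norm, ‖H⁻¹ − (∇²f(x))⁻¹‖ ≤ (ηω/μ)·‖x − x*‖² and ‖H − ∇²f(x)‖ ≤ ηωL·‖x − x*‖². -/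
/-!
Write `A = ∇²f(x)`. Since the spectra of `H⁻¹A` and `A⁻¹H` lie below `η`, in the Loewner order
`A ⪯ ηH` and `H ⪯ ηA`, hence also `H⁻¹ ⪯ ηA⁻¹` and `A⁻¹ ⪯ ηH⁻¹`; testing against any vector
gives `η ≥ 1`. Then `-η(η-1)A ⪯ (1-η)H ⪯ H - A ⪯ (η-1)A`, so with `A ⪯ L·I` the spectrum of
`H - A` lies in `[-η(η-1)L, η(η-1)L]`, which bounds its spectral norm. The same argument with
`A⁻¹ ⪯ μ⁻¹I` bounds `H⁻¹ - A⁻¹` by `η(η-1)/μ`, and `η - 1 ≤ ω‖x - x*‖²` finishes.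
-/

open Matrix
open scoped RealInnerProductSpace

open scoped MatrixOrder

section LoewnerOrder

variable {ι : Type*} [Fintype ι]

theorem Matrix.PosDef.one_le_of_le_smul_of_le_smul [Nonempty ι] {P Q : Matrix ι ι ℝ}
    (hP : P.PosDef) (hQ : Q.PosDef) {η : ℝ} (hQP : Q ≤ η • P) (hPQ : P ≤ η • Q) : 1 ≤ η := by
  set v : ι → ℝ := fun _ => 1
  have hv : v ≠ 0 := fun h => one_ne_zero (congrFun h (Classical.arbitrary ι))
  have hform : ∀ {R S : Matrix ι ι ℝ}, R ≤ S → star v ⬝ᵥ R *ᵥ v ≤ star v ⬝ᵥ S *ᵥ v := by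
    intro R S h
    simpa [sub_mulVec, dotProduct_sub] using h.dotProduct_mulVec_nonneg v
  have hp := hP.dotProduct_mulVec_pos hv
  have hq := hQ.dotProduct_mulVec_pos hv
  have h1 := hform hQP
  have h2 := hform hPQ
  simp only [smul_mulVec, dotProduct_smul, smul_eq_mul] at h1 h2
  nlinarith

variable [DecidableEq ι]

/-- Conjugating by `P^{-1/2}` turns `P⁻¹ * Q` into the symmetric matrix `P^{-1/2} Q P^{-1/2}`
with the same spectrum, and `Q ≤ c • P` into `P^{-1/2} Q P^{-1/2} ≤ c • 1`. -/
theorem Matrix.PosDef.le_smul_iff_forall_spectrum_le {P Q : Matrix ι ι ℝ} (hP : P.PosDef)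
    (hQ : Q.IsHermitian) {c : ℝ} :
    Q ≤ c • P ↔ ∀ t ∈ spectrum ℝ (P⁻¹ * Q), t ≤ c := by
  obtain ⟨s, hs⟩ : IsUnit (CFC.sqrt P) :=
    (CFC.isUnit_sqrt_iff P hP.posSemidef.nonneg).mpr hP.isUnit
  have hss : (s : Matrix ι ι ℝ) * s = P := hs ▸ CFC.sqrt_mul_sqrt_self P hP.posSemidef.nonneg
  set u := s⁻¹
  have hustar : star (u : Matrix ι ι ℝ) = u := by
    rw [Matrix.coe_units_inv, hs]
    exact (CFC.sqrt_nonneg P).posSemidef.isHermitian.inv.eq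
  have hsimilar :
      P⁻¹ * Q = u * (u * Q * u : Matrix ι ι ℝ) * ((u⁻¹ : (Matrix ι ι ℝ)ˣ) : Matrix ι ι ℝ) := by
    rw [← hss, Matrix.mul_inv_rev, ← Matrix.coe_units_inv]
    simp [u, mul_assoc]
  have hconj : star (u : Matrix ι ι ℝ) * (c • P - Q) * u = c • 1 - u * Q * u := by
    rw [← hss, hustar]
    simp [u, mul_sub, sub_mul, mul_assoc]
  have hM : IsSelfAdjoint (u * Q * u : Matrix ι ι ℝ) := by
    simpa [hustar] using hQ.isSelfAdjoint.conjugate (u : Matrix ι ι ℝ)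
  rw [hsimilar, spectrum.units_conjugate, ← le_algebraMap_iff_spectrum_le hM,
    Algebra.algebraMap_eq_smul_one, ← sub_nonneg, ← sub_nonneg (b := u * Q * u), ← hconj,
    u.isUnit.star_left_conjugate_nonneg_iff]

theorem Matrix.PosDef.inv_le_smul_inv_iff {P Q : Matrix ι ι ℝ} (hP : P.PosDef) (hQ : Q.PosDef)
    {c : ℝ} : P⁻¹ ≤ c • Q⁻¹ ↔ Q ≤ c • P := by
  obtain ⟨p, hp⟩ := hP.isUnit
  have hcomm : spectrum ℝ (Q * P⁻¹) = spectrum ℝ (P⁻¹ * Q) := by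
    rw [← hp, ← Matrix.coe_units_inv, ← spectrum.units_conjugate (u := p⁻¹)]
    simp [mul_assoc]
  rw [hQ.inv.le_smul_iff_forall_spectrum_le hP.inv.isHermitian,
    hP.le_smul_iff_forall_spectrum_le hQ.isHermitian,
    Matrix.nonsing_inv_nonsing_inv _ ((Matrix.isUnit_iff_isUnit_det Q).mp hQ.isUnit), hcomm]

theorem Matrix.PosDef.inv_le_inv_smul_one {A : Matrix ι ι ℝ} (hA : A.PosDef) {μ : ℝ} (hμ : 0 < μ)
    (hμA : μ • 1 ≤ A) : A⁻¹ ≤ μ⁻¹ • 1 := by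
  have h : 1 ≤ μ⁻¹ • A := by
    simpa [smul_smul, inv_mul_cancel₀ hμ.ne'] using
      smul_le_smul_of_nonneg_left hμA (inv_nonneg.mpr hμ.le)
  simpa using (hA.inv_le_smul_inv_iff PosDef.one).mpr h

end LoewnerOrder

theorem neg_smul_le_sub_and_sub_le_smul {E : Type*} [AddCommGroup E] [PartialOrder E]
    [IsOrderedAddMonoid E] [Module ℝ E] [PosSMulMono ℝ E] {P Q e : E} (he : 0 ≤ e) {η K : ℝ}
    (hη : 1 ≤ η) (hK : 0 ≤ K) (hQP : Q ≤ η • P) (hPQ : P ≤ η • Q) (hPK : P ≤ K • e) :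
    -((η * (η - 1) * K) • e) ≤ Q - P ∧ Q - P ≤ (η * (η - 1) * K) • e := by
  have hη' : 0 ≤ η - 1 := sub_nonneg.mpr hη
  constructor
  · rw [neg_le_sub_iff_le_add]
    calc P ≤ η • Q := hPQ
      _ = Q + (η - 1) • Q := by module
      _ ≤ Q + (η - 1) • (η • (K • e)) := by
        refine add_le_add_right (smul_le_smul_of_nonneg_left ?_ hη') Q
        exact hQP.trans (smul_le_smul_of_nonneg_left hPK (by linarith))
      _ = Q + (η * (η - 1) * K) • e := by module
  · calc Q - P ≤ η • P - P := sub_le_sub_right hQP P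
      _ = (η - 1) • P := by module
      _ ≤ (η - 1) • (K • e) := smul_le_smul_of_nonneg_left hPK hη'
      _ = ((η - 1) * K) • e := by module
      _ ≤ (η * (η - 1) * K) • e := by
        refine smul_le_smul_of_nonneg_right ?_ he
        nlinarith [mul_nonneg (mul_nonneg hη' hη') hK]

open scoped Matrix.Norms.L2Operator in
theorem mNorm_le_of_neg_smul_one_le_of_le_smul_one {n : ℕ} {M : Matrix (Fin n) (Fin n) ℝ}
    {c : ℝ} (hc : 0 ≤ c) (hlo : -(c • 1) ≤ M) (hhi : M ≤ c • 1) : mNorm M ≤ c := by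
  have hM : IsSelfAdjoint M := by
    have h := (isHermitian_one.smul (IsSelfAdjoint.all c)).sub (Matrix.le_iff.mp hhi).isHermitian
    rwa [sub_sub_cancel] at h
  rw [← Algebra.algebraMap_eq_smul_one] at hhi
  rw [← Algebra.algebraMap_eq_smul_one, ← map_neg] at hlo
  rw [mNorm, ← Matrix.cstar_norm_def, ← cfc_id ℝ M hM]
  refine norm_cfc_le hc fun t ht => abs_le.mpr ⟨?_, ?_⟩
  · exact (algebraMap_le_iff_le_spectrum hM).mp hlo t ht
  · exact (le_algebraMap_iff_spectrum_le hM).mp hhi t ht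

theorem mNorm_sub_le_of_le_smul_of_le_smul {n : ℕ} {P Q : Matrix (Fin n) (Fin n) ℝ} {η K : ℝ}
    (hη : 1 ≤ η) (hK : 0 ≤ K) (hQP : Q ≤ η • P) (hPQ : P ≤ η • Q) (hPK : P ≤ K • 1) :
    mNorm (Q - P) ≤ η * (η - 1) * K := by
  obtain ⟨hlo, hhi⟩ := neg_smul_le_sub_and_sub_le_smul zero_le_one hη hK hQP hPQ hPK
  have hc : 0 ≤ η * (η - 1) * K :=
    mul_nonneg (mul_nonneg (by linarith) (sub_nonneg.mpr hη)) hK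
  exact mNorm_le_of_neg_smul_one_le_of_le_smul_one hc hlo hhi

theorem le_lamMax {n : ℕ} {M : Matrix (Fin n) (Fin n) ℝ} {t : ℝ} (ht : t ∈ spectrum ℝ M) :
    t ≤ lamMax M :=
  le_csSup (Matrix.finite_spectrum M).bddAbove ht

theorem socgs_hessian_approximation_accuracy_general {n : ℕ}
    (X : Set (EuclideanSpace ℝ (Fin n)))
    (Hess : EuclideanSpace ℝ (Fin n) → Matrix (Fin n) (Fin n) ℝ)
    (μ L : ℝ) (hμ : 0 < μ) (hμL : μ ≤ L)
    (hbound : ∀ x ∈ X, (Hess x - μ • (1 : Matrix (Fin n) (Fin n) ℝ)).PosSemidef ∧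
      (L • (1 : Matrix (Fin n) (Fin n) ℝ) - Hess x).PosSemidef)
    (xstar : EuclideanSpace ℝ (Fin n))
    (x : EuclideanSpace ℝ (Fin n)) (hx : x ∈ X)
    (H : Matrix (Fin n) (Fin n) ℝ) (hH : H.PosDef)
    (η : ℝ) (hη : η = max (lamMax (H⁻¹ * Hess x)) (lamMax ((Hess x)⁻¹ * H)))
    (ω : ℝ) (hacc : η - 1 ≤ ω * ‖x - xstar‖ ^ 2) :
    mNorm (H⁻¹ - (Hess x)⁻¹) ≤ η * ω / μ * ‖x - xstar‖ ^ 2 ∧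
    mNorm (H - Hess x) ≤ η * ω * L * ‖x - xstar‖ ^ 2 := by
  set A := Hess x
  -- In dimension 0, `η = sSup ∅ = 0`, so `η ≥ 1` fails and this case is treated apart.
  rcases isEmpty_or_nonempty (Fin n) with hn | hn
  · simp [mNorm, Subsingleton.elim x xstar, Subsingleton.elim (toEuclideanCLM (𝕜 := ℝ) _) 0]
  obtain ⟨hμA, hAL⟩ : μ • 1 ≤ A ∧ A ≤ L • 1 := hbound x hx
  have hA : A.PosDef := by simpa using (PosDef.one.smul hμ).add_posSemidef hμA
  have hAH : A ≤ η • H := (hH.le_smul_iff_forall_spectrum_le hA.isHermitian).mpr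
    fun t ht => hη ▸ (le_lamMax ht).trans (le_max_left _ _)
  have hHA : H ≤ η • A := (hA.le_smul_iff_forall_spectrum_le hH.isHermitian).mpr
    fun t ht => hη ▸ (le_lamMax ht).trans (le_max_right _ _)
  have hη1 : 1 ≤ η := hA.one_le_of_le_smul_of_le_smul hH hHA hAH
  have hrate : η * (η - 1) ≤ η * (ω * ‖x - xstar‖ ^ 2) :=
    mul_le_mul_of_nonneg_left hacc (by linarith)
  constructor
  · calc mNorm (H⁻¹ - A⁻¹) ≤ η * (η - 1) * μ⁻¹ :=
          mNorm_sub_le_of_le_smul_of_le_smul hη1 (inv_nonneg.mpr hμ.le)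
            ((hH.inv_le_smul_inv_iff hA).mpr hAH) ((hA.inv_le_smul_inv_iff hH).mpr hHA)
            (hA.inv_le_inv_smul_one hμ hμA)
      _ ≤ η * (ω * ‖x - xstar‖ ^ 2) * μ⁻¹ := by gcongr
      _ = η * ω / μ * ‖x - xstar‖ ^ 2 := by ring
  · calc mNorm (H - A) ≤ η * (η - 1) * L :=
          mNorm_sub_le_of_le_smul_of_le_smul hη1 (hμ.le.trans hμL) hHA hAH hAL
      _ ≤ η * (ω * ‖x - xstar‖ ^ 2) * L := by gcongr; linarith
      _ = η * ω * L * ‖x - xstar‖ ^ 2 := by ring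

/-- accuracy of the Hessian approximation: if `H` is symmetric positive
definite with `η := max{λ_max(H⁻¹∇²f(x)), λ_max((∇²f(x))⁻¹H)}` satisfying
`η − 1 ≤ ω‖x − x*‖²`, then in spectral norm
`‖H⁻¹ − (∇²f(x))⁻¹‖ ≤ (ηω/μ)‖x − x*‖²` and `‖H − ∇²f(x)‖ ≤ ηωL‖x − x*‖²`. -/
theorem socgs_hessian_approximation_accuracy {n : ℕ}
    (X : Set (EuclideanSpace ℝ (Fin n)))
    (hne : X.Nonempty) (hcomp : IsCompact X) (hconv : Convex ℝ X)
    (f : EuclideanSpace ℝ (Fin n) → ℝ) (hf : ContDiff ℝ 2 f)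
    (Hess : EuclideanSpace ℝ (Fin n) → Matrix (Fin n) (Fin n) ℝ)
    (hHess : ∀ x, HasFDerivAt (gradient f) (Matrix.toEuclideanCLM (𝕜 := ℝ) (Hess x)) x)
    (μ L : ℝ) (hμ : 0 < μ) (hμL : μ ≤ L)
    (hbound : ∀ x ∈ X, (Hess x - μ • (1 : Matrix (Fin n) (Fin n) ℝ)).PosSemidef ∧
      (L • (1 : Matrix (Fin n) (Fin n) ℝ) - Hess x).PosSemidef)
    (xstar : EuclideanSpace ℝ (Fin n)) (hxstar : xstar ∈ X)
    (hminstar : ∀ y ∈ X, f xstar ≤ f y)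
    (huniq : ∀ z ∈ X, (∀ y ∈ X, f z ≤ f y) → z = xstar)
    (x : EuclideanSpace ℝ (Fin n)) (hx : x ∈ X)
    (H : Matrix (Fin n) (Fin n) ℝ) (hH : H.PosDef)
    (η : ℝ) (hη : η = max (lamMax (H⁻¹ * Hess x)) (lamMax ((Hess x)⁻¹ * H)))
    (ω : ℝ) (hω : 0 ≤ ω) (hacc : η - 1 ≤ ω * ‖x - xstar‖ ^ 2) :
    mNorm (H⁻¹ - (Hess x)⁻¹) ≤ η * ω / μ * ‖x - xstar‖ ^ 2 ∧
    mNorm (H - Hess x) ≤ η * ω * L * ‖x - xstar‖ ^ 2 :=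
  socgs_hessian_approximation_accuracy_general X Hess μ L hμ hμL hbound xstar x hx H hH η hη ω hacc
end

section
/- Let X ⊆ ℝⁿ be a nonempty compact convex set with ‖y − z‖ ≤ D for all y, z ∈ X, and let f : ℝⁿ → ℝ be differentiable and L-smooth on X, with x* a minimizer of f over X. For x ∈ X set h := f(x) − f(x*) and define the Frank-Wolfe gap g(x) := max_{v∈X} ⟨∇f(x), x − v⟩. Then: if h ≥ LD²/2 then g(x) ≤ LD²/2 + h, and if h ≤ LD²/2 then g(x) ≤ D·√(2Lh). -/
open Matrix
open scoped RealInnerProductSpace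

/-!
Moving from `x` towards any `v ∈ X` by a step `γ ∈ [0, 1]` stays in `X`, and smoothness together
with the minimality of `x*` gives `γ ⟨∇f(x), x − v⟩ ≤ h + L D² γ² / 2`. Taking `γ = 1` gives the
first bound; taking `γ = ⟨∇f(x), x − v⟩ / (L D²)`, the maximiser of the left side minus the
quadratic term, gives the second.
-/

lemma le_sqrt_of_forall_mul_le {t h c : ℝ}
    (hstep : ∀ γ : ℝ, 0 < γ → γ ≤ 1 → γ * t ≤ h + c * γ ^ 2 / 2) (hhc : h ≤ c / 2) :
    t ≤ Real.sqrt (2 * c * h) := by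
  rcases le_or_gt t 0 with ht | ht
  · exact ht.trans (Real.sqrt_nonneg _)
  have htc : t ≤ c := by linarith [hstep 1 one_pos le_rfl]
  have hc : 0 < c := ht.trans_le htc
  have hγ := hstep (t / c) (div_pos ht hc) ((div_le_one hc).2 htc)
  have hct : c * (t / c) = t := mul_div_cancel₀ t hc.ne'
  refine Real.le_sqrt_of_sq_le ?_
  nlinarith

section InnerProductSpace

variable {E : Type*} [NormedAddCommGroup E] [InnerProductSpace ℝ E]

lemma Convex.mul_inner_sub_le_of_smooth {X : Set E} (hX : Convex ℝ X) {f : E → ℝ}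
    {d x v xstar : E} {L D γ : ℝ} (hL : 0 ≤ L)
    (hsmooth : ∀ y ∈ X, f y - f x ≤ ⟪d, y - x⟫ + L / 2 * ‖y - x‖ ^ 2)
    (hmin : ∀ y ∈ X, f xstar ≤ f y) (hx : x ∈ X) (hv : v ∈ X) (hvx : ‖v - x‖ ≤ D)
    (hγ0 : 0 ≤ γ) (hγ1 : γ ≤ 1) :
    γ * ⟪d, x - v⟫ ≤ f x - f xstar + L * D ^ 2 * γ ^ 2 / 2 := by
  set y := x + γ • (v - x)
  have hyX : y ∈ X := by
    convert hX hx hv (sub_nonneg.2 hγ1) hγ0 (by ring) using 1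
    simp only [y, smul_sub, sub_smul, one_smul]
    abel
  have hyx : y - x = γ • (v - x) := add_sub_cancel_left x _
  have hinner : ⟪d, y - x⟫ = -(γ * ⟪d, x - v⟫) := by
    rw [hyx, real_inner_smul_right, ← neg_sub x v, inner_neg_right, mul_neg]
  have hnorm : ‖y - x‖ ^ 2 ≤ γ ^ 2 * D ^ 2 := by
    rw [hyx, norm_smul, Real.norm_of_nonneg hγ0, mul_pow]
    gcongr
  have := hsmooth y hyX
  have := hmin y hyX
  nlinarith

end InnerProductSpace

theorem socgs_frank_wolfe_gap_bound_general {n : ℕ}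
    (X : Set (EuclideanSpace ℝ (Fin n)))
    (hconv : Convex ℝ X)
    (D : ℝ) (hD : ∀ y ∈ X, ∀ z ∈ X, ‖y - z‖ ≤ D)
    (f : EuclideanSpace ℝ (Fin n) → ℝ)
    (L : ℝ) (hL : 0 < L)
    (hsmooth : ∀ x ∈ X, ∀ y ∈ X,
      f x - f y ≤ ⟪gradient f y, x - y⟫ + L / 2 * ‖x - y‖ ^ 2)
    (xstar : EuclideanSpace ℝ (Fin n))
    (hminstar : ∀ y ∈ X, f xstar ≤ f y)
    (x : EuclideanSpace ℝ (Fin n)) (hx : x ∈ X)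
    (h g : ℝ) (hh : h = f x - f xstar)
    (hg : g = sSup ((fun v => ⟪gradient f x, x - v⟫) '' X)) :
    (L * D ^ 2 / 2 ≤ h → g ≤ L * D ^ 2 / 2 + h) ∧
    (h ≤ L * D ^ 2 / 2 → g ≤ D * Real.sqrt (2 * L * h)) := by
  have hstep : ∀ v ∈ X, ∀ γ : ℝ, 0 < γ → γ ≤ 1 →
      γ * ⟪gradient f x, x - v⟫ ≤ h + L * D ^ 2 * γ ^ 2 / 2 := fun v hv γ hγ0 hγ1 =>
    hh ▸ hconv.mul_inner_sub_le_of_smooth hL.le (fun y hy => hsmooth y hy x hx) hminstar hx hv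
      (hD v hv x hx) hγ0.le hγ1
  have hg_le : ∀ B, (∀ v ∈ X, ⟪gradient f x, x - v⟫ ≤ B) → g ≤ B := fun B hB =>
    hg ▸ csSup_le ((Set.nonempty_of_mem hx).image _) (Set.forall_mem_image.2 hB)
  have hD0 : 0 ≤ D := (norm_nonneg _).trans (hD x hx x hx)
  refine ⟨fun _ => hg_le _ fun v hv => ?_, fun hhc => hg_le _ fun v hv => ?_⟩
  · linarith [hstep v hv 1 one_pos le_rfl]
  · calc ⟪gradient f x, x - v⟫ ≤ Real.sqrt (2 * (L * D ^ 2) * h) :=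
          le_sqrt_of_forall_mul_le (hstep v hv) (by linarith)
      _ = D * Real.sqrt (2 * L * h) := by
          rw [show 2 * (L * D ^ 2) * h = D ^ 2 * (2 * L * h) by ring, Real.sqrt_mul (sq_nonneg D),
            Real.sqrt_sq hD0]

/-- convergence of the Frank-Wolfe gap in terms of the primal gap:
for `L`-smooth `f` over a set of diameter at most `D`, with primal gap
`h = f(x) − f(x*)` and Frank-Wolfe gap `g(x) = max_{v∈X}⟨∇f(x), x − v⟩`:
if `h ≥ LD²/2` then `g(x) ≤ LD²/2 + h`, and if `h ≤ LD²/2` then `g(x) ≤ D√(2Lh)`. -/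
theorem socgs_frank_wolfe_gap_bound {n : ℕ}
    (X : Set (EuclideanSpace ℝ (Fin n)))
    (hne : X.Nonempty) (hcomp : IsCompact X) (hconv : Convex ℝ X)
    (D : ℝ) (hD : ∀ y ∈ X, ∀ z ∈ X, ‖y - z‖ ≤ D)
    (f : EuclideanSpace ℝ (Fin n) → ℝ) (hf : Differentiable ℝ f)
    (L : ℝ) (hL : 0 < L)
    (hsmooth : ∀ x ∈ X, ∀ y ∈ X,
      f x - f y ≤ ⟪gradient f y, x - y⟫ + L / 2 * ‖x - y‖ ^ 2)
    (xstar : EuclideanSpace ℝ (Fin n)) (hxstar : xstar ∈ X)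
    (hminstar : ∀ y ∈ X, f xstar ≤ f y)
    (x : EuclideanSpace ℝ (Fin n)) (hx : x ∈ X)
    (h g : ℝ) (hh : h = f x - f xstar)
    (hg : g = sSup ((fun v => ⟪gradient f x, x - v⟫) '' X)) :
    (L * D ^ 2 / 2 ≤ h → g ≤ L * D ^ 2 / 2 + h) ∧
    (h ≤ L * D ^ 2 / 2 → g ≤ D * Real.sqrt (2 * L * h)) :=
  socgs_frank_wolfe_gap_bound_general X hconv D hD f L hL hsmooth xstar hminstar x hx h g hh hg
end
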